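/- arXiv:2507.04102 — 3 statements merged into one kernel-verified Lean document; each statement's English description precedes it below -/
import Mathlib

section
/- Let D ≥ 2. There exist constants 0 < c ≤ C depending only on D such that for all j ∈ ℕ, ε > 0, and y ∈ ℝ^{D−1}: c · 2^{j(D+1)ε/2} ≤ ∫_{ℝ^D} |ξ₀| |𝓕(χ̃^{j,ε}_y)(ξ₀)| dξ₀ ≤ C · 2^{j(D+1)ε/2}, where |ξ₀| denotes the Euclidean norm on ℝ^D. -/
open MeasureTheory

/-- The Gaussian window `χ̃^{j,ε}_y` on `ℝ^D ≅ ℝ × ℝ^{D-1}` (here `D = d + 1`, the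
coordinate `x 0` playing the role of `x_0` and `x k.succ` that of `x_k`). -/
noncomputable def chiTilde (d j : ℕ) (ε : ℝ) (y : EuclideanSpace ℝ (Fin d))
    (x : EuclideanSpace ℝ (Fin (d + 1))) : ℝ :=
  Real.pi ^ (-((d : ℝ) + 1) / 4) * Real.exp (-(x 0) ^ 2 / 2) *
    (2 : ℝ) ^ (ε * (j : ℝ) * (d : ℝ) / 2) *
    ∏ k : Fin d, Real.exp (-(2 : ℝ) ^ (2 * ε * (j : ℝ)) * (x k.succ - y k) ^ 2 / 2)

/-!
The window is a tensor product of one-dimensional Gaussians, of width `1` in `x₀` and `2^{-εj}`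
in the other coordinates. Hence `|𝓕χ̃|` is the amplitude `π^{-D/4} 2^{εj(D-1)/2}` times a product
of Gaussian probability densities, the one in `ξ_i` having first absolute moment proportional to
`1` for `i = 0` and to `2^{εj}` otherwise. Bounding `‖ξ‖` below by one coordinate `|ξ_k|`, `k ≠ 0`,
and above by `∑ |ξ_i|` gives both bounds.
-/

open Real FourierTransform

noncomputable def gaussianDensity (a w : ℝ) : ℝ := √(a / π) * rexp (-a * w ^ 2)

section Gaussian

variable {a : ℝ}

theorem gaussianDensity_nonneg (a w : ℝ) : 0 ≤ gaussianDensity a w := by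
  unfold gaussianDensity; positivity

theorem integrable_gaussianDensity (ha : 0 < a) : Integrable (gaussianDensity a) :=
  (integrable_exp_neg_mul_sq ha).const_mul _

theorem integrable_abs_mul_gaussianDensity (ha : 0 < a) :
    Integrable fun t => |t| * gaussianDensity a t := by
  refine ((integrable_mul_exp_neg_mul_sq ha).abs.const_mul √(a / π)).congr
    (.of_forall fun t => ?_)
  simp only [gaussianDensity, abs_mul, abs_exp]
  ring

theorem integral_gaussianDensity (ha : 0 < a) : ∫ w, gaussianDensity a w = 1 := by
  simp only [gaussianDensity]
  rw [integral_const_mul, integral_gaussian, ← sqrt_mul (by positivity),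
    div_mul_div_cancel₀ pi_pos.ne', div_self ha.ne', sqrt_one]

theorem integral_abs_mul_exp_neg_mul_sq (ha : 0 < a) :
    ∫ t : ℝ, |t| * rexp (-a * t ^ 2) = a⁻¹ := by
  have hIoi : ∫ t in Set.Ioi 0, t * rexp (-a * t ^ 2) = (2 * a)⁻¹ := by
    apply Complex.ofReal_injective
    rw [← integral_complex_ofReal]
    push_cast
    exact integral_mul_cexp_neg_mul_sq (by simpa using ha)
  have habs : (fun t : ℝ => |t| * rexp (-a * t ^ 2)) = fun t => |t| * rexp (-a * |t| ^ 2) := by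
    simp only [sq_abs]
  rw [habs, integral_comp_abs (f := fun t => t * rexp (-a * t ^ 2)), hIoi]
  field_simp

theorem integral_abs_mul_gaussianDensity (ha : 0 < a) :
    ∫ t, |t| * gaussianDensity a t = (√(π * a))⁻¹ := by
  simp only [gaussianDensity, mul_left_comm |_|]
  rw [integral_const_mul, integral_abs_mul_exp_neg_mul_sq ha, sqrt_div ha.le, sqrt_mul pi_pos.le]
  field_simp
  rw [sq_sqrt ha.le]

theorem norm_fourier_gaussian {b : ℝ} (hb : 0 < b) (c w : ℝ) :
    ‖𝓕 (fun t : ℝ => (rexp (-b * (t - c) ^ 2 / 2) : ℂ)) w‖ =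
      gaussianDensity (2 * π ^ 2 / b) w := by
  set β : ℝ := b / (2 * π)
  have hβ : 0 < β := by positivity
  have hshift : (fun t : ℝ => (rexp (-b * (t - c) ^ 2 / 2) : ℂ))
      = (fun t : ℝ => Complex.exp (-π * β * t ^ 2)) ∘ fun t => t + -c := by
    ext t
    simp only [Function.comp_apply, Complex.ofReal_exp, β]
    congr 1
    push_cast
    field_simp
    ring
  change ‖VectorFourier.fourierIntegral 𝐞 volume (innerₗ ℝ) _ w‖ = _
  rw [hshift, VectorFourier.fourierIntegral_comp_add_right, Circle.norm_smul]
  change ‖𝓕 (fun t : ℝ => Complex.exp (-π * β * t ^ 2)) w‖ = _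
  have hsqrt : (β : ℂ) ^ (1 / 2 : ℂ) = ((√β : ℝ) : ℂ) := by
    rw [sqrt_eq_rpow, Complex.ofReal_cpow hβ.le]
    norm_num
  have hexp : -(π : ℂ) / β * (w : ℂ) ^ 2 = ((-(2 * π ^ 2 / b) * w ^ 2 : ℝ) : ℂ) := by
    simp only [β]
    push_cast
    field_simp
  rw [fourier_gaussian_pi (by simpa using hβ), hsqrt]
  dsimp only
  rw [hexp, norm_mul, norm_div, norm_one, Complex.norm_real, Complex.norm_exp_ofReal,
    norm_of_nonneg (sqrt_nonneg _), gaussianDensity, one_div, ← sqrt_inv]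
  congr 2
  simp only [β]
  field_simp

end Gaussian

theorem fourier_const_mul {V : Type*} [NormedAddCommGroup V] [InnerProductSpace ℝ V]
    [MeasurableSpace V] [BorelSpace V] [FiniteDimensional ℝ V] (c : ℂ) (f : V → ℂ) (ξ : V) :
    𝓕 (fun x => c * f x) ξ = c * 𝓕 f ξ := by
  simp_rw [fourier_eq, ← mul_smul_comm, integral_const_mul]

section EuclideanSpace

variable {ι : Type*} [Fintype ι]

theorem fourier_euclideanSpace_prod (f : ι → ℝ → ℂ) (ξ : EuclideanSpace ℝ ι) :
    𝓕 (fun x : EuclideanSpace ℝ ι => ∏ i, f i (x i)) ξ = ∏ i, 𝓕 (f i) (ξ i) := by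
  simp_rw [fourier_eq']
  rw [← (PiLp.volume_preserving_toLp ι).integral_comp
    (MeasurableEquiv.toLp 2 _).measurableEmbedding, ← integral_fintype_prod_volume_eq_prod]
  simp only [PiLp.inner_apply, RCLike.inner_apply, conj_trivial, smul_eq_mul, Finset.mul_sum,
    Complex.ofReal_sum, Finset.sum_mul, Complex.exp_sum, Finset.prod_mul_distrib]

theorem lintegral_ofReal_euclideanSpace_prod (g : ι → ℝ → ℝ) (hg : ∀ i, Integrable (g i))
    (hg₀ : ∀ i t, 0 ≤ g i t) :
    ∫⁻ x : EuclideanSpace ℝ ι, ENNReal.ofReal (∏ i, g i (x i)) =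
      ENNReal.ofReal (∏ i, ∫ t, g i t) := by
  have hprod : Integrable fun x : ι → ℝ => ∏ i, g i (x i) := Integrable.fintype_prod hg
  rw [← (PiLp.volume_preserving_toLp ι).lintegral_comp_emb
    (MeasurableEquiv.toLp 2 _).measurableEmbedding, ← integral_fintype_prod_volume_eq_prod,
    ofReal_integral_eq_lintegral_ofReal hprod
      (.of_forall fun x => Finset.prod_nonneg fun i _ => hg₀ i (x i))]

theorem norm_le_sum_abs_apply (ξ : EuclideanSpace ℝ ι) : ‖ξ‖ ≤ ∑ i, |ξ i| := by
  rw [EuclideanSpace.norm_eq, sqrt_le_left (Finset.sum_nonneg fun i _ => abs_nonneg _)]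
  simpa only [norm_eq_abs, sq_abs] using
    Finset.sum_sq_le_sq_sum_of_nonneg (s := Finset.univ) fun i _ => abs_nonneg (ξ i)

variable {a : ι → ℝ}

theorem lintegral_abs_apply_mul_prod_gaussianDensity [DecidableEq ι] (ha : ∀ i, 0 < a i)
    (m : ι) :
    ∫⁻ ξ : EuclideanSpace ℝ ι, ENNReal.ofReal (|ξ m| * ∏ i, gaussianDensity (a i) (ξ i)) =
      ENNReal.ofReal (√(π * a m))⁻¹ := by
  set g : ι → ℝ → ℝ := fun i t => (if i = m then |t| else 1) * gaussianDensity (a i) t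
  have hprod (ξ : EuclideanSpace ℝ ι) :
      |ξ m| * ∏ i, gaussianDensity (a i) (ξ i) = ∏ i, g i (ξ i) := by
    simp only [g, Finset.prod_mul_distrib, Finset.prod_ite_eq', Finset.mem_univ, if_true]
  have hintegral (i : ι) : ∫ t, g i t = if i = m then (√(π * a m))⁻¹ else 1 := by
    by_cases h : i = m
    · subst h; simpa [g] using integral_abs_mul_gaussianDensity (ha i)
    · simpa [g, h] using integral_gaussianDensity (ha i)
  have hg (i : ι) : Integrable (g i) := by
    by_cases h : i = m
    · simpa [g, h] using integrable_abs_mul_gaussianDensity (ha i)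
    · simpa [g, h] using integrable_gaussianDensity (ha i)
  simp_rw [hprod]
  rw [lintegral_ofReal_euclideanSpace_prod g hg fun i t => mul_nonneg
    (by split_ifs <;> positivity) (gaussianDensity_nonneg _ _)]
  simp only [hintegral, Finset.prod_ite_eq', Finset.mem_univ, if_true]

theorem ofReal_le_lintegral_norm_mul_prod_gaussianDensity (ha : ∀ i, 0 < a i) (m : ι) :
    ENNReal.ofReal (√(π * a m))⁻¹ ≤
      ∫⁻ ξ : EuclideanSpace ℝ ι, ENNReal.ofReal (‖ξ‖ * ∏ i, gaussianDensity (a i) (ξ i)) := by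
  classical
  rw [← lintegral_abs_apply_mul_prod_gaussianDensity ha m]
  refine lintegral_mono fun ξ => ENNReal.ofReal_le_ofReal ?_
  exact mul_le_mul_of_nonneg_right (by simpa using PiLp.norm_apply_le ξ m)
    (Finset.prod_nonneg fun i _ => gaussianDensity_nonneg _ _)

theorem lintegral_norm_mul_prod_gaussianDensity_le (ha : ∀ i, 0 < a i) {K : ℝ}
    (hK : ∀ i, (√(π * a i))⁻¹ ≤ K) :
    ∫⁻ ξ : EuclideanSpace ℝ ι, ENNReal.ofReal (‖ξ‖ * ∏ i, gaussianDensity (a i) (ξ i)) ≤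
      ENNReal.ofReal (Fintype.card ι * K) := by
  classical
  have hG (ξ : EuclideanSpace ℝ ι) : 0 ≤ ∏ i, gaussianDensity (a i) (ξ i) :=
    Finset.prod_nonneg fun i _ => gaussianDensity_nonneg _ _
  calc ∫⁻ ξ : EuclideanSpace ℝ ι, ENNReal.ofReal (‖ξ‖ * ∏ i, gaussianDensity (a i) (ξ i))
      ≤ ∫⁻ ξ : EuclideanSpace ℝ ι,
          ∑ m, ENNReal.ofReal (|ξ m| * ∏ i, gaussianDensity (a i) (ξ i)) := by
        refine lintegral_mono fun ξ => ?_
        rw [← ENNReal.ofReal_sum_of_nonneg fun m _ => mul_nonneg (abs_nonneg _) (hG ξ),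
          ← Finset.sum_mul]
        exact ENNReal.ofReal_le_ofReal (mul_le_mul_of_nonneg_right (norm_le_sum_abs_apply ξ) (hG ξ))
    _ = ∑ m, ENNReal.ofReal (√(π * a m))⁻¹ := by
        rw [lintegral_finsetSum _ fun m _ => by unfold gaussianDensity; fun_prop]
        simp only [lintegral_abs_apply_mul_prod_gaussianDensity ha]
    _ ≤ ∑ _m : ι, ENNReal.ofReal K := Finset.sum_le_sum fun m _ => ENNReal.ofReal_le_ofReal (hK m)
    _ = ENNReal.ofReal (Fintype.card ι * K) := by
        rw [Finset.sum_const, Finset.card_univ, nsmul_eq_mul, ENNReal.ofReal_mul (by positivity),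
          ENNReal.ofReal_natCast]

end EuclideanSpace

noncomputable def chiScale (d j : ℕ) (ε : ℝ) : Fin (d + 1) → ℝ :=
  Fin.cons 1 fun _ => (2 : ℝ) ^ (2 * ε * j)

def chiCenter {d : ℕ} (y : EuclideanSpace ℝ (Fin d)) : Fin (d + 1) → ℝ :=
  Fin.cons 0 fun k => y k

noncomputable def chiAmplitude (d j : ℕ) (ε : ℝ) : ℝ :=
  π ^ (-((d : ℝ) + 1) / 4) * 2 ^ (ε * j * d / 2)

noncomputable def chiConst (d : ℕ) : ℝ := π ^ (-((d : ℝ) + 1) / 4) / √(2 * π ^ 3)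

theorem chiAmplitude_pos (d j : ℕ) (ε : ℝ) : 0 < chiAmplitude d j ε := by
  unfold chiAmplitude; positivity

theorem chiConst_pos (d : ℕ) : 0 < chiConst d := by
  unfold chiConst; positivity

section chiTilde

variable {d j : ℕ} {ε : ℝ}

theorem chiScale_pos (i : Fin (d + 1)) : 0 < chiScale d j ε i := by
  cases i using Fin.cases <;> simp only [chiScale, Fin.cons_zero, Fin.cons_succ] <;> positivity

theorem two_pi_sq_div_chiScale_pos (i : Fin (d + 1)) : 0 < 2 * π ^ 2 / chiScale d j ε i :=
  div_pos (by positivity) (chiScale_pos i)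

theorem chiTilde_eq_prod (y : EuclideanSpace ℝ (Fin d)) (x : EuclideanSpace ℝ (Fin (d + 1))) :
    chiTilde d j ε y x = chiAmplitude d j ε *
      ∏ i, rexp (-chiScale d j ε i * (x i - chiCenter y i) ^ 2 / 2) := by
  rw [Fin.prod_univ_succ]
  simp only [chiTilde, chiAmplitude, chiScale, chiCenter, Fin.cons_zero, Fin.cons_succ]
  ring_nf

theorem norm_fourier_chiTilde (y : EuclideanSpace ℝ (Fin d)) (ξ : EuclideanSpace ℝ (Fin (d + 1))) :
    ‖𝓕 (fun x => (chiTilde d j ε y x : ℂ)) ξ‖ = chiAmplitude d j ε *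
      ∏ i, gaussianDensity (2 * π ^ 2 / chiScale d j ε i) (ξ i) := by
  simp_rw [chiTilde_eq_prod, Complex.ofReal_mul _ (∏ _, _), Complex.ofReal_prod]
  rw [fourier_const_mul, fourier_euclideanSpace_prod
      (fun i t => (rexp (-chiScale d j ε i * (t - chiCenter y i) ^ 2 / 2) : ℂ)),
    norm_mul, norm_prod, Complex.norm_real, norm_of_nonneg (chiAmplitude_pos d j ε).le]
  simp_rw [norm_fourier_gaussian (chiScale_pos _)]

theorem lintegral_norm_mul_norm_fourier_chiTilde (y : EuclideanSpace ℝ (Fin d)) :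
    ∫⁻ ξ : EuclideanSpace ℝ (Fin (d + 1)),
        ENNReal.ofReal (‖ξ‖ * ‖𝓕 (fun x => (chiTilde d j ε y x : ℂ)) ξ‖) =
      ENNReal.ofReal (chiAmplitude d j ε) *
        ∫⁻ ξ : EuclideanSpace ℝ (Fin (d + 1)),
          ENNReal.ofReal (‖ξ‖ * ∏ i, gaussianDensity (2 * π ^ 2 / chiScale d j ε i) (ξ i)) := by
  simp_rw [norm_fourier_chiTilde, mul_left_comm ‖_‖, ENNReal.ofReal_mul (chiAmplitude_pos d j ε).le]
  exact lintegral_const_mul' _ _ ENNReal.ofReal_ne_top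

theorem inv_sqrt_pi_mul_chiScale (i : Fin (d + 1)) :
    (√(π * (2 * π ^ 2 / chiScale d j ε i)))⁻¹ = √(chiScale d j ε i) / √(2 * π ^ 3) := by
  rw [show π * (2 * π ^ 2 / chiScale d j ε i) = 2 * π ^ 3 / chiScale d j ε i by ring,
    sqrt_div' _ (chiScale_pos i).le, inv_div]

theorem sqrt_chiScale_succ (k : Fin d) : √(chiScale d j ε k.succ) = 2 ^ (ε * j) := by
  rw [chiScale, Fin.cons_succ, show 2 * ε * j = (ε * j) * 2 by ring, rpow_mul zero_le_two,
    rpow_two, sqrt_sq (by positivity)]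

theorem sqrt_chiScale_le (hε : 0 ≤ ε) (i : Fin (d + 1)) : √(chiScale d j ε i) ≤ 2 ^ (ε * j) := by
  cases i using Fin.cases with
  | zero => simpa [chiScale] using one_le_rpow one_le_two (by positivity)
  | succ k => exact (sqrt_chiScale_succ k).le

theorem chiConst_mul_two_rpow :
    chiConst d * 2 ^ (j * (d + 2) * ε / 2) =
      chiAmplitude d j ε * (2 ^ (ε * j) / √(2 * π ^ 3)) := by
  rw [chiConst, chiAmplitude, mul_div_assoc', mul_assoc _ (2 ^ _), ← rpow_add two_pos]
  ring_nf

theorem ofReal_le_lintegral_norm_mul_norm_fourier_chiTilde (hd : 1 ≤ d)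
    (y : EuclideanSpace ℝ (Fin d)) :
    ENNReal.ofReal (chiConst d * 2 ^ (j * (d + 2) * ε / 2)) ≤
      ∫⁻ ξ : EuclideanSpace ℝ (Fin (d + 1)),
        ENNReal.ofReal (‖ξ‖ * ‖𝓕 (fun x => (chiTilde d j ε y x : ℂ)) ξ‖) := by
  let k : Fin d := ⟨0, hd⟩
  rw [lintegral_norm_mul_norm_fourier_chiTilde, chiConst_mul_two_rpow, ← sqrt_chiScale_succ k,
    ← inv_sqrt_pi_mul_chiScale, ENNReal.ofReal_mul (chiAmplitude_pos d j ε).le]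
  gcongr
  exact ofReal_le_lintegral_norm_mul_prod_gaussianDensity two_pi_sq_div_chiScale_pos k.succ

theorem lintegral_norm_mul_norm_fourier_chiTilde_le (hε : 0 ≤ ε) (y : EuclideanSpace ℝ (Fin d)) :
    ∫⁻ ξ : EuclideanSpace ℝ (Fin (d + 1)),
        ENNReal.ofReal (‖ξ‖ * ‖𝓕 (fun x => (chiTilde d j ε y x : ℂ)) ξ‖) ≤
      ENNReal.ofReal ((d + 1) * chiConst d * 2 ^ (j * (d + 2) * ε / 2)) := by
  rw [lintegral_norm_mul_norm_fourier_chiTilde, mul_assoc ((d : ℝ) + 1), chiConst_mul_two_rpow,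
    mul_left_comm, ENNReal.ofReal_mul (chiAmplitude_pos d j ε).le]
  gcongr
  refine (lintegral_norm_mul_prod_gaussianDensity_le (K := 2 ^ (ε * j) / √(2 * π ^ 3))
    two_pi_sq_div_chiScale_pos fun i => ?_).trans_eq
    (by rw [Fintype.card_fin, Nat.cast_succ])
  rw [inv_sqrt_pi_mul_chiScale]
  gcongr
  exact sqrt_chiScale_le hε i

end chiTilde

/-- Two-sided bound
`∫_{ℝ^D} |ξ₀| |𝓕(χ̃^{j,ε}_y)(ξ₀)| dξ₀ ∼ 2^{j(D+1)ε/2}`, with constants depending only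
on `D = d + 1`. -/
theorem stmt6 (d : ℕ) (hd : 1 ≤ d) :
    ∃ c C : ℝ, 0 < c ∧ c ≤ C ∧
      ∀ (j : ℕ) (ε : ℝ), 0 < ε → ∀ y : EuclideanSpace ℝ (Fin d),
        ENNReal.ofReal (c * (2 : ℝ) ^ ((j : ℝ) * ((d : ℝ) + 2) * ε / 2)) ≤
          (∫⁻ ξ : EuclideanSpace ℝ (Fin (d + 1)),
            ENNReal.ofReal
              (‖ξ‖ * ‖VectorFourier.fourierIntegral Real.fourierChar volume
                (innerₗ (EuclideanSpace ℝ (Fin (d + 1)))) (fun x => (chiTilde d j ε y x : ℂ)) ξ‖)) ∧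
        (∫⁻ ξ : EuclideanSpace ℝ (Fin (d + 1)),
            ENNReal.ofReal
              (‖ξ‖ * ‖VectorFourier.fourierIntegral Real.fourierChar volume
                (innerₗ (EuclideanSpace ℝ (Fin (d + 1)))) (fun x => (chiTilde d j ε y x : ℂ)) ξ‖)) ≤
          ENNReal.ofReal (C * (2 : ℝ) ^ ((j : ℝ) * ((d : ℝ) + 2) * ε / 2)) := by
  refine ⟨chiConst d, (d + 1) * chiConst d, chiConst_pos d,
    le_mul_of_one_le_left (chiConst_pos d).le (by simp), fun j ε hε y => ?_⟩
  exact ⟨ofReal_le_lintegral_norm_mul_norm_fourier_chiTilde hd y,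
    lintegral_norm_mul_norm_fourier_chiTilde_le hε.le y⟩
end

section
/- Let D ≥ 2 and F ≥ 0. There is a constant c = c(F) > 0 such that for every unit vector (ξ_0, ξ) ∈ S^{D−1} ⊂ ℝ × ℝ^{D−1}, every v ∈ ℝ^{D−1} with |v| ≤ F, and every δ ∈ (0,1]: (ξ_0 + v·ξ)² + δ|ξ|² ≥ c δ. -/
/-!
Write `s = ⟪v, ξ⟫`, so `s² ≤ F²‖ξ‖²`. From `ξ₀²/2 ≤ (ξ₀ + s)² + s²` one gets
`1/2 ≤ (1 + F²) ((ξ₀ + s)² + ‖ξ‖²)` on the unit sphere, a bound free of `δ`; since `δ ≤ 1`,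
`(ξ₀ + s)² + δ‖ξ‖² ≥ δ ((ξ₀ + s)² + ‖ξ‖²)`, which gives `c = 1 / (2 (1 + F²))`.
-/

open RealInnerProductSpace

lemma half_sq_le_add_sq_add_sq (a b : ℝ) : a ^ 2 / 2 ≤ (a + b) ^ 2 + b ^ 2 := by
  nlinarith [sq_nonneg (a + 2 * b)]

section InnerProductSpace

variable {E : Type*} [NormedAddCommGroup E] [InnerProductSpace ℝ E]

lemma real_inner_sq_le_of_norm_le {F : ℝ} {v : E} (hv : ‖v‖ ≤ F) (ξ : E) :
    ⟪v, ξ⟫ ^ 2 ≤ F ^ 2 * ‖ξ‖ ^ 2 := by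
  have h : |⟪v, ξ⟫| ≤ F * ‖ξ‖ :=
    (abs_real_inner_le_norm v ξ).trans (mul_le_mul_of_nonneg_right hv (norm_nonneg ξ))
  rw [← mul_pow, ← sq_abs]
  exact pow_le_pow_left₀ (abs_nonneg _) h 2

lemma inv_two_mul_one_add_sq_le_sq_add_inner_add_norm_sq {F ξ₀ : ℝ} {ξ v : E}
    (hunit : ξ₀ ^ 2 + ‖ξ‖ ^ 2 = 1) (hv : ‖v‖ ≤ F) :
    1 / (2 * (1 + F ^ 2)) ≤ (ξ₀ + ⟪v, ξ⟫) ^ 2 + ‖ξ‖ ^ 2 := by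
  have hs := real_inner_sq_le_of_norm_le hv ξ
  have hhalf := half_sq_le_add_sq_add_sq ξ₀ ⟪v, ξ⟫
  rw [div_le_iff₀' (by positivity)]
  nlinarith [sq_nonneg (ξ₀ + ⟪v, ξ⟫), sq_nonneg ‖ξ‖, mul_nonneg (sq_nonneg F) (sq_nonneg (ξ₀ + ⟪v, ξ⟫))]

lemma mul_le_sq_add_inner_add_mul_norm_sq {F ξ₀ δ : ℝ} {ξ v : E}
    (hunit : ξ₀ ^ 2 + ‖ξ‖ ^ 2 = 1) (hv : ‖v‖ ≤ F) (hδ : 0 < δ) (hδ1 : δ ≤ 1) :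
    1 / (2 * (1 + F ^ 2)) * δ ≤ (ξ₀ + ⟪v, ξ⟫) ^ 2 + δ * ‖ξ‖ ^ 2 :=
  calc 1 / (2 * (1 + F ^ 2)) * δ
      ≤ ((ξ₀ + ⟪v, ξ⟫) ^ 2 + ‖ξ‖ ^ 2) * δ :=
        mul_le_mul_of_nonneg_right
          (inv_two_mul_one_add_sq_le_sq_add_inner_add_norm_sq hunit hv) hδ.le
    _ ≤ (ξ₀ + ⟪v, ξ⟫) ^ 2 + δ * ‖ξ‖ ^ 2 := by
        nlinarith [mul_nonneg (sq_nonneg (ξ₀ + ⟪v, ξ⟫)) (sub_nonneg.2 hδ1)]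

end InnerProductSpace

theorem stmt8_general (F : ℝ) :
    ∃ c : ℝ, 0 < c ∧
      ∀ (d : ℕ), 1 ≤ d →
        ∀ (ξ₀ : ℝ) (ξ v : EuclideanSpace ℝ (Fin d)),
          ξ₀ ^ 2 + ‖ξ‖ ^ 2 = 1 → ‖v‖ ≤ F →
            ∀ δ : ℝ, 0 < δ → δ ≤ 1 →
              c * δ ≤ (ξ₀ + ∑ k, v k * ξ k) ^ 2 + δ * ‖ξ‖ ^ 2 := by
  refine ⟨1 / (2 * (1 + F ^ 2)), by positivity, ?_⟩
  intro d _ ξ₀ ξ v hunit hv δ hδ hδ1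
  have hinner : ∑ k, v k * ξ k = ⟪v, ξ⟫ := by
    simp [PiLp.inner_apply, mul_comm]
  rw [hinner]
  exact mul_le_sq_add_inner_add_mul_norm_sq hunit hv hδ hδ1

/-- For `F ≥ 0` there is a constant `c = c(F) > 0` such that for every
dimension `D = d + 1 ≥ 2`, every unit vector `(ξ₀, ξ) ∈ 𝕊^{D-1} ⊂ ℝ × ℝ^{D-1}`, every
`v ∈ ℝ^{D-1}` with `|v| ≤ F`, and every `δ ∈ (0,1]`, one has
`(ξ₀ + v·ξ)² + δ|ξ|² ≥ c δ`. -/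
theorem stmt8 (F : ℝ) (hF : 0 ≤ F) :
    ∃ c : ℝ, 0 < c ∧
      ∀ (d : ℕ), 1 ≤ d →
        ∀ (ξ₀ : ℝ) (ξ v : EuclideanSpace ℝ (Fin d)),
          ξ₀ ^ 2 + ‖ξ‖ ^ 2 = 1 → ‖v‖ ≤ F →
            ∀ δ : ℝ, 0 < δ → δ ≤ 1 →
              c * δ ≤ (ξ₀ + ∑ k, v k * ξ k) ^ 2 + δ * ‖ξ‖ ^ 2 :=
  stmt8_general F
end

section
/- Let m ≥ 1, let L ⊆ ℝ^m be a measurable set of finite Lebesgue measure, let g : L → ℝ be measurable, and let α > 0. Assume the non-degeneracy bound Leb{λ ∈ L : |g(λ)| < ν} ≤ ν^α for every ν > 0. Then for every δ > 0, every b ∈ (0,1], and every μ > 0: ( ∫_L ( δ b / (g(λ)² + δ b) )² dλ )^{1/2} ≤ μ^{α/2} + (δ/μ²) · Leb(L)^{1/2}. -/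
/-!
Split `L` according to whether `|g| < μ`. On the small set the integrand is at most `1`, and by
the non-degeneracy bound that set has measure at most `μ ^ α`; elsewhere `g ^ 2 ≥ μ ^ 2`, so the
integrand is at most `(δ / μ ^ 2) ^ 2`. Hence the integral is at most
`μ ^ α + (δ / μ ^ 2) ^ 2 · Leb(L)`, and subadditivity of the square root concludes.
-/

open MeasureTheory Set

lemma div_sq_add_le_one {c : ℝ} (hc : 0 < c) (x : ℝ) : c / (x ^ 2 + c) ≤ 1 :=
  (div_le_one (by positivity)).2 (by nlinarith [sq_nonneg x])

lemma div_sq_add_le_div_sq {c μ x : ℝ} (hc : 0 < c) (hμ : 0 < μ) (hx : μ ≤ |x|) :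
    c / (x ^ 2 + c) ≤ c / μ ^ 2 := by
  have : μ ^ 2 ≤ x ^ 2 := by simpa only [sq_abs] using pow_le_pow_left₀ hμ.le hx 2
  exact div_le_div_of_nonneg_left hc.le (by positivity) (by linarith)

lemma integral_sq_div_sq_add_le {X : Type*} [MeasurableSpace X] (ν : Measure X)
    [IsFiniteMeasure ν] {f : X → ℝ} (hf : Measurable f) {c μ : ℝ} (hc : 0 < c) (hμ : 0 < μ) :
    ∫ x, (c / (f x ^ 2 + c)) ^ 2 ∂ν ≤
      ν.real {x | |f x| < μ} + (c / μ ^ 2) ^ 2 * ν.real univ := by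
  set S := {x | |f x| < μ}
  have hS : MeasurableSet S := hf.abs measurableSet_Iio
  have hbound : ∀ x, (c / (f x ^ 2 + c)) ^ 2 ≤ S.indicator 1 x + (c / μ ^ 2) ^ 2 := by
    intro x
    have hpos : 0 ≤ c / (f x ^ 2 + c) := by positivity
    by_cases hx : x ∈ S
    · rw [indicator_of_mem hx, Pi.one_apply]
      exact le_add_of_le_of_nonneg (pow_le_one₀ hpos (div_sq_add_le_one hc (f x))) (sq_nonneg _)
    · rw [indicator_of_notMem hx, zero_add]
      exact pow_le_pow_left₀ hpos (div_sq_add_le_div_sq hc hμ (not_lt.1 hx)) 2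
  have hind : Integrable (S.indicator (1 : X → ℝ)) ν := (integrable_const 1).indicator hS
  have hint : Integrable (fun x => (c / (f x ^ 2 + c)) ^ 2) ν := by
    refine .of_bound (by fun_prop : Measurable _).aestronglyMeasurable 1 (ae_of_all _ fun x => ?_)
    rw [Real.norm_eq_abs, abs_of_nonneg (by positivity)]
    exact pow_le_one₀ (by positivity) (div_sq_add_le_one hc (f x))
  calc ∫ x, (c / (f x ^ 2 + c)) ^ 2 ∂ν
      ≤ ∫ x, (S.indicator 1 x + (c / μ ^ 2) ^ 2) ∂ν :=
        integral_mono hint (hind.add (integrable_const _)) hbound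
    _ = ν.real S + (c / μ ^ 2) ^ 2 * ν.real univ := by
        rw [integral_add hind (integrable_const _), integral_indicator_one hS, integral_const,
          smul_eq_mul, mul_comm]

lemma sqrt_add_sq_mul_le {a B V : ℝ} (ha : 0 ≤ a) (hB : 0 ≤ B) (hV : 0 ≤ V) :
    √(a + B ^ 2 * V) ≤ √a + B * √V := by
  rw [Real.sqrt_le_iff]
  refine ⟨by positivity, ?_⟩
  nlinarith [Real.sq_sqrt ha, Real.sq_sqrt hV, mul_nonneg (mul_nonneg hB (Real.sqrt_nonneg a))
    (Real.sqrt_nonneg V)]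

theorem stmt9_general (m : ℕ)
    (L : Set (EuclideanSpace ℝ (Fin m)))
    (hLfin : volume L < ⊤)
    (g : EuclideanSpace ℝ (Fin m) → ℝ) (hg : Measurable g)
    (α : ℝ)
    (hnd : ∀ ν : ℝ, 0 < ν →
      volume {lam ∈ L | |g lam| < ν} ≤ ENNReal.ofReal (ν ^ α)) :
    ∀ δ : ℝ, 0 < δ → ∀ b : ℝ, 0 < b → b ≤ 1 → ∀ μ : ℝ, 0 < μ →
      (∫ lam in L, (δ * b / (g lam ^ 2 + δ * b)) ^ 2) ^ ((1 : ℝ) / 2) ≤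
        μ ^ (α / 2) + δ / μ ^ 2 * (volume L).toReal ^ ((1 : ℝ) / 2) := by
  intro δ hδ b hb hb1 μ hμ
  have : IsFiniteMeasure (volume.restrict L) := isFiniteMeasure_restrict.2 hLfin.ne
  have hS : MeasurableSet {x | |g x| < μ} := hg.abs measurableSet_Iio
  have hsmall : (volume.restrict L).real {x | |g x| < μ} ≤ μ ^ α := by
    rw [measureReal_restrict_apply hS, inter_comm, measureReal_def]
    exact ENNReal.toReal_le_of_le_ofReal (by positivity) (hnd μ hμ)
  have hcoef : δ * b / μ ^ 2 ≤ δ / μ ^ 2 := by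
    gcongr
    exact mul_le_of_le_one_right hδ.le hb1
  have hintegral := integral_sq_div_sq_add_le (volume.restrict L) hg (mul_pos hδ hb) hμ
  calc (∫ lam in L, (δ * b / (g lam ^ 2 + δ * b)) ^ 2) ^ ((1 : ℝ) / 2)
      = √(∫ lam in L, (δ * b / (g lam ^ 2 + δ * b)) ^ 2) := (Real.sqrt_eq_rpow _).symm
    _ ≤ √(μ ^ α + (δ / μ ^ 2) ^ 2 * (volume L).toReal) := by
        gcongr
        refine hintegral.trans (add_le_add hsmall ?_)
        rw [measureReal_restrict_apply_univ, measureReal_def]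
        gcongr
    _ ≤ √(μ ^ α) + δ / μ ^ 2 * √(volume L).toReal :=
        sqrt_add_sq_mul_le (by positivity) (by positivity) ENNReal.toReal_nonneg
    _ = μ ^ (α / 2) + δ / μ ^ 2 * (volume L).toReal ^ ((1 : ℝ) / 2) := by
        rw [Real.sqrt_eq_rpow, Real.sqrt_eq_rpow, ← Real.rpow_mul hμ.le, mul_one_div]

/-- Let `L ⊆ ℝ^m` be a measurable set of finite Lebesgue measure,
`g : L → ℝ` measurable, and `α > 0` with the non-degeneracy bound
`Leb {λ ∈ L : |g λ| < ν} ≤ ν^α` for all `ν > 0`. Then for all `δ > 0`, `b ∈ (0,1]`,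
`μ > 0`:
`(∫_L (δ b / (g(λ)² + δ b))² dλ)^{1/2} ≤ μ^{α/2} + (δ/μ²)·Leb(L)^{1/2}`. -/
theorem stmt9 (m : ℕ) (hm : 1 ≤ m)
    (L : Set (EuclideanSpace ℝ (Fin m))) (hLmeas : MeasurableSet L)
    (hLfin : volume L < ⊤)
    (g : EuclideanSpace ℝ (Fin m) → ℝ) (hg : Measurable g)
    (α : ℝ) (hα : 0 < α)
    (hnd : ∀ ν : ℝ, 0 < ν →
      volume {lam ∈ L | |g lam| < ν} ≤ ENNReal.ofReal (ν ^ α)) :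
    ∀ δ : ℝ, 0 < δ → ∀ b : ℝ, 0 < b → b ≤ 1 → ∀ μ : ℝ, 0 < μ →
      (∫ lam in L, (δ * b / (g lam ^ 2 + δ * b)) ^ 2) ^ ((1 : ℝ) / 2) ≤
        μ ^ (α / 2) + δ / μ ^ 2 * (volume L).toReal ^ ((1 : ℝ) / 2) :=
  stmt9_general m L hLfin g hg α hnd
end
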